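/- arXiv:2403.07281 — 6 statements merged into one kernel-verified Lean document; each statement's English description precedes it below -/
import Mathlib

section
/- For any κ = (κ₁,...,κₙ) ∈ ℝⁿ and any 1 ≤ k ≤ n, the identity (n-2)σ₁(κ)σ₂(κ) - 3nσ₃(κ) = Σ_{i<j} (κⱼ - κᵢ)² σ₁(κ|ij) holds, where σₘ denotes the m-th elementary symmetric polynomial and σ₁(κ|ij) is the sum of the κₗ with l ∉ {i,j}. -/
open Finset

/-- The m-th elementary symmetric polynomial of κ : Fin n → ℝ. -/
noncomputable def esymm (n m : ℕ) (κ : Fin n → ℝ) : ℝ :=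
  ∑ s ∈ Finset.powersetCard m (Finset.univ : Finset (Fin n)), ∏ i ∈ s, κ i

section aux

variable {α : Type*} [DecidableEq α] (κ : α → ℝ)

noncomputable def E (s : Finset α) (m : ℕ) : ℝ :=
  ∑ t ∈ Finset.powersetCard m s, ∏ i ∈ t, κ i

lemma E_zero (s : Finset α) : E κ s 0 = 1 := by
  simp [E]

lemma E_insert (a : α) (s : Finset α) (h : a ∉ s) (m : ℕ) :
    E κ (insert a s) (m + 1) = E κ s (m + 1) + κ a * E κ s m := by
  unfold E
  rw [Finset.powersetCard_succ_insert h, Finset.sum_union, Finset.sum_image]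
  · rw [Finset.mul_sum]
    congr 1
    apply Finset.sum_congr rfl
    intro t ht
    rw [Finset.mem_powersetCard] at ht
    rw [Finset.prod_insert (fun hc => h (ht.1 hc))]
  · intro t ht u hu he
    rw [Finset.mem_coe, Finset.mem_powersetCard] at ht hu
    have hat : a ∉ t := fun hc => h (ht.1 hc)
    have hau : a ∉ u := fun hc => h (hu.1 hc)
    have := congrArg (fun t => Finset.erase t a) he
    simpa [Finset.erase_insert hat, Finset.erase_insert hau] using this
  · rw [Finset.disjoint_right]
    intro t ht hts
    simp only [Finset.mem_image] at ht
    obtain ⟨u, hu, rfl⟩ := ht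
    rw [Finset.mem_powersetCard] at hts
    exact h (hts.1 (Finset.mem_insert_self a u))

lemma E_one (s : Finset α) : E κ s 1 = ∑ i ∈ s, κ i := by
  unfold E
  rw [Finset.powersetCard_one, Finset.sum_map]
  simp

lemma E_two (s : Finset α) :
    2 * E κ s 2 = (∑ i ∈ s, κ i) ^ 2 - ∑ i ∈ s, κ i ^ 2 := by
  induction s using Finset.induction_on with
  | empty =>
    simp only [E]
    rw [show (Finset.powersetCard 2 (∅ : Finset α)) = ∅ by simp]
    simp
  | @insert a s h ih =>
    rw [show E κ (insert a s) 2 = E κ s 2 + κ a * E κ s 1 from E_insert κ a s h 1,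
      E_one, Finset.sum_insert h, Finset.sum_insert h]
    linear_combination ih

lemma E_three (s : Finset α) :
    6 * E κ s 3 = (∑ i ∈ s, κ i) ^ 3 - 3 * (∑ i ∈ s, κ i) * (∑ i ∈ s, κ i ^ 2)
      + 2 * ∑ i ∈ s, κ i ^ 3 := by
  induction s using Finset.induction_on with
  | empty =>
    simp only [E]
    rw [show (Finset.powersetCard 3 (∅ : Finset α)) = ∅ by simp]
    simp
  | @insert a s h ih =>
    have h2 := E_two κ s
    rw [show E κ (insert a s) 3 = E κ s 3 + κ a * E κ s 2 from E_insert κ a s h 2,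
      Finset.sum_insert h, Finset.sum_insert h, Finset.sum_insert h]
    linear_combination ih + 3 * κ a * h2

end aux

/-- (n-2)σ₁σ₂ - 3nσ₃ = Σ_{i<j} (κⱼ - κᵢ)² σ₁(κ|ij). -/
theorem stmt0 (n : ℕ) (hn : 2 ≤ n) (κ : Fin n → ℝ) :
    ((n : ℝ) - 2) * esymm n 1 κ * esymm n 2 κ - 3 * (n : ℝ) * esymm n 3 κ =
      ∑ i : Fin n, ∑ j ∈ Finset.univ.filter (fun j => i < j),
        (κ j - κ i) ^ 2 * ∑ l ∈ (Finset.univ \ {i, j}), κ l := by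
  classical
  set p1 := ∑ i : Fin n, κ i with hp1
  set p2 := ∑ i : Fin n, κ i ^ 2 with hp2
  set p3 := ∑ i : Fin n, κ i ^ 3 with hp3
  have h1 : esymm n 1 κ = p1 := E_one κ Finset.univ
  have h2 : 2 * esymm n 2 κ = p1 ^ 2 - p2 := E_two κ Finset.univ
  have h3 : 6 * esymm n 3 κ = p1 ^ 3 - 3 * p1 * p2 + 2 * p3 := E_three κ Finset.univ
  -- rewrite inner sdiff sum
  have hin : ∀ i : Fin n, ∑ j ∈ Finset.univ.filter (fun j => i < j),
      (κ j - κ i) ^ 2 * ∑ l ∈ (Finset.univ \ {i, j}), κ l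
      = ∑ j ∈ Finset.univ.filter (fun j => i < j),
      (κ j - κ i) ^ 2 * (p1 - κ i - κ j) := by
    intro i
    apply Finset.sum_congr rfl
    intro j hj
    rw [Finset.mem_filter] at hj
    have hij : i ≠ j := ne_of_lt hj.2
    rw [Finset.sum_sdiff_eq_sub (Finset.subset_univ _), Finset.sum_pair hij]
    ring_nf
    rw [← hp1]
  simp only [hin]
  set f : Fin n → Fin n → ℝ := fun i j => (κ j - κ i) ^ 2 * (p1 - κ i - κ j) with hf
  have hsym : ∀ i j, f i j = f j i := by
    intro i j
    show (κ j - κ i) ^ 2 * (p1 - κ i - κ j) = (κ i - κ j) ^ 2 * (p1 - κ j - κ i)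
    ring
  have hdiag : ∀ i, f i i = 0 := by intro i; simp [hf]
  have hsplit : ∑ i : Fin n, ∑ j : Fin n, f i j
      = 2 * ∑ i : Fin n, ∑ j ∈ Finset.univ.filter (fun j => i < j), f i j := by
    have h1' : ∀ i : Fin n, ∑ j : Fin n, f i j
        = (∑ j ∈ Finset.univ.filter (fun j => i < j), f i j)
          + ∑ j ∈ Finset.univ.filter (fun j => j < i), f i j := by
      intro i
      rw [← Finset.sum_filter_add_sum_filter_not Finset.univ (fun j => i < j)]
      congr 1
      have : Finset.univ.filter (fun j => ¬ i < j)
          = insert i (Finset.univ.filter (fun j => j < i)) := by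
        ext j
        simp only [Finset.mem_filter, Finset.mem_insert, Finset.mem_univ, true_and, not_lt]
        constructor
        · intro hj
          rcases lt_or_eq_of_le hj with h | h
          · exact Or.inr h
          · exact Or.inl h
        · rintro (rfl | h)
          · exact le_refl _
          · exact le_of_lt h
      rw [this, Finset.sum_insert (by simp), hdiag i, zero_add]
    have hswap : ∑ i : Fin n, ∑ j ∈ Finset.univ.filter (fun j => j < i), f i j
        = ∑ i : Fin n, ∑ j ∈ Finset.univ.filter (fun j => i < j), f i j := by
      rw [Finset.sum_comm' (s' := fun j => Finset.univ.filter (fun i => j < i))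
        (t' := Finset.univ) (by intro x y; simp)]
      apply Finset.sum_congr rfl
      intro j _
      apply Finset.sum_congr rfl
      intro i _
      exact hsym i j
    simp only [h1', Finset.sum_add_distrib, hswap]
    ring
  -- compute the full double sum in power sums
  have hfull : ∑ i : Fin n, ∑ j : Fin n, f i j
      = 2 * ((n : ℝ) + 1) * p1 * p2 - 2 * p1 ^ 3 - 2 * (n : ℝ) * p3 := by
    have hinner : ∀ i : Fin n, ∑ j : Fin n, f i j
        = (n : ℝ) * (κ i ^ 2 * (p1 - κ i))
          + (- κ i ^ 2 - 2 * κ i * (p1 - κ i)) * p1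
          + ((p1 - κ i) + 2 * κ i) * p2 - p3 := by
      intro i
      have : ∀ j : Fin n, f i j
          = (κ i ^ 2 * (p1 - κ i))
            + (- κ i ^ 2 - 2 * κ i * (p1 - κ i)) * κ j
            + ((p1 - κ i) + 2 * κ i) * κ j ^ 2 - κ j ^ 3 := by
        intro j; simp only [hf]; ring
      rw [Finset.sum_congr rfl (fun j _ => this j)]
      simp only [Finset.sum_add_distrib, Finset.sum_sub_distrib, ← Finset.mul_sum,
        Finset.sum_const, Finset.card_univ, Fintype.card_fin, nsmul_eq_mul]
      rw [← hp1, ← hp2, ← hp3]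
      ring
    rw [Finset.sum_congr rfl (fun i _ => hinner i)]
    have expand : ∀ i : Fin n,
        (n : ℝ) * (κ i ^ 2 * (p1 - κ i))
          + (- κ i ^ 2 - 2 * κ i * (p1 - κ i)) * p1
          + ((p1 - κ i) + 2 * κ i) * p2 - p3
        = (p1 * p2 - p3) + (p2 - 2 * p1 ^ 2) * κ i
          + (((n : ℝ) + 1) * p1) * κ i ^ 2 - (n : ℝ) * κ i ^ 3 := by
      intro i; ring
    rw [Finset.sum_congr rfl (fun i _ => expand i)]
    simp only [Finset.sum_add_distrib, Finset.sum_sub_distrib, ← Finset.mul_sum,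
      Finset.sum_const, Finset.card_univ, Fintype.card_fin, nsmul_eq_mul]
    rw [← hp1, ← hp2, ← hp3]
    ring
  have key : ∑ i : Fin n, ∑ j ∈ Finset.univ.filter (fun j => i < j), f i j
      = ((n : ℝ) + 1) * p1 * p2 - p1 ^ 3 - (n : ℝ) * p3 := by
    have := hsplit.symm.trans hfull
    linarith
  rw [show (∑ i : Fin n, ∑ j ∈ Finset.univ.filter (fun j => i < j),
      (κ j - κ i) ^ 2 * (p1 - κ i - κ j))
      = ∑ i : Fin n, ∑ j ∈ Finset.univ.filter (fun j => i < j), f i j from rfl, key, h1]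
  linear_combination (((n : ℝ) - 2) * p1 / 2) * h2 - ((n : ℝ) / 2) * h3
end

section
/- Let κ ∈ Γ₂⁺ (i.e. p₁(κ) > 0 and p₂(κ) > 0) and F = p₂^{1/2}. Then (Σᵢ κᵢ² ∂F/∂κᵢ)/F² − 1 ≥ (n/2)(Σᵢ ∂F/∂κᵢ − 1). Equivalently, (n p₁ p₂ − (n−2) p₃ − 2 p₂^{3/2}) / (2 p₂^{3/2}) ≥ (n/2)(p₁/p₂^{1/2} − 1). -/
open Finset

/-- The normalized m-th elementary symmetric polynomial pₘ = σₘ / C(n,m). -/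
noncomputable def pnorm (n m : ℕ) (κ : Fin n → ℝ) : ℝ :=
  esymm n m κ / (n.choose m : ℝ)

open Polynomial in
lemma iter_aux : ∀ (k : ℕ) (p : ℝ[X]) (d : ℕ), p.natDegree = d + k → Multiset.card p.roots = d + k →
    (derivative^[k] p).natDegree = d ∧ Multiset.card (derivative^[k] p).roots = d := by
  intro k
  induction k with
  | zero => intro p d h1 h2; simpa using ⟨h1, h2⟩
  | succ k ih =>
    intro p d h1 h2
    have hle : (derivative p).natDegree ≤ d + k := by
      have := natDegree_derivative_le p; omega
    have hge : d + k ≤ Multiset.card (derivative p).roots := by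
      have := p.card_roots_le_derivative; omega
    have hcr := (derivative p).card_roots'
    have hcard : Multiset.card (derivative p).roots = d + k := by omega
    have hdeg : (derivative p).natDegree = d + k := by omega
    rw [Function.iterate_succ_apply]
    exact ih _ _ hdeg hcard

open Polynomial in
lemma cubic_reduce (m : ℕ) (κ : Fin (m + 3) → ℝ) :
    ∃ a b c : ℝ, pnorm (m+3) 1 κ = -(a+b+c)/3 ∧ pnorm (m+3) 2 κ = (a*b+(b*c+a*c))/3 ∧
      pnorm (m+3) 3 κ = -(a*(b*c)) := by
  set f : ℝ[X] := ∏ i : Fin (m+3), (X + C (κ i)) with hf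
  have hcardu : (Finset.univ : Finset (Fin (m+3))).card = (m+3) := by simp
  -- roots of f
  have hroots : f.roots = (Finset.univ : Finset (Fin (m+3))).val.map (fun i => -κ i) := by
    have : f = (((Finset.univ : Finset (Fin (m+3))).val.map (fun i => -κ i)).map
        (fun a => X - C a)).prod := by
      rw [Multiset.map_map, hf, Finset.prod]
      congr 1
      apply Multiset.map_congr rfl
      intro i _
      simp [sub_neg_eq_add]
    rw [this, roots_multiset_prod_X_sub_C]
  have hrcard : Multiset.card f.roots = (m+3) := by rw [hroots]; simp
  have hfdeg : f.natDegree = (m+3) := by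
    rw [hf, natDegree_prod_of_monic _ _ (fun i _ => monic_X_add_C _)]
    simp
  -- coefficients of f are esymm
  have hcoeff : ∀ j : ℕ, j ≤ 3 → f.coeff (j + m) = esymm (m+3) (3 - j) κ := by
    intro j hj
    have h1 : j + m ≤ (Finset.univ : Finset (Fin (m+3))).card := by omega
    rw [hf, Finset.prod_X_add_C_coeff _ _ h1]
    have : (Finset.univ : Finset (Fin (m+3))).card - (j + m) = 3 - j := by omega
    rw [this, esymm]
  -- the cubic g
  set g : ℝ[X] := derivative^[m] f with hg
  obtain ⟨hgdeg, hgroots⟩ := iter_aux m f 3 (by omega) (by omega)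
  obtain ⟨a, b, c, habc⟩ := Multiset.card_eq_three.mp hgroots
  have hfact := C_leadingCoeff_mul_prod_multiset_X_sub_C (p := g) (by rw [hgdeg, hgroots])
  set L := g.leadingCoeff with hL
  have hgeq : g = C L * (X^3 - C (a+b+c) * X^2 + C (a*b+(b*c+a*c)) * X - C (a*(b*c))) := by
    rw [← hfact, habc]
    congr 1
    simp only [Multiset.insert_eq_cons, Multiset.map_cons, Multiset.map_singleton,
      Multiset.prod_cons, Multiset.prod_singleton, map_add, map_mul]
    ring
  -- coefficient equations
  have hiter : ∀ j : ℕ, j ≤ 3 →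
      g.coeff j = ((j + m).descFactorial m : ℝ) * esymm (m+3) (3 - j) κ := by
    intro j hj
    rw [hg, coeff_iterate_derivative, hcoeff j hj, nsmul_eq_mul]
  have e3 := hiter 3 le_rfl
  have e2 := hiter 2 (by norm_num)
  have e1 := hiter 1 (by norm_num)
  have e0 := hiter 0 (by norm_num)
  -- coefficients from the factorization
  have cs : ∀ j : ℕ, g.coeff j = L * ((if j = 3 then (1:ℝ) else 0) - (a+b+c) * (if j = 2 then 1 else 0)
      + (a*b+(b*c+a*c)) * (if j = 1 then 1 else 0) - (a*(b*c)) * (if j = 0 then 1 else 0)) := by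
    intro j
    rw [hgeq]
    simp only [coeff_C_mul, coeff_sub, coeff_add, coeff_X_pow, coeff_C]
    rw [show (X : ℝ[X]) = X ^ 1 by ring]
    simp only [coeff_X_pow, mul_ite, mul_one, mul_zero]
  have c3 : g.coeff 3 = L := by rw [cs]; norm_num
  have c2 : g.coeff 2 = L * (-(a+b+c)) := by rw [cs]; norm_num
  have c1 : g.coeff 1 = L * (a*b+(b*c+a*c)) := by rw [cs]; norm_num
  have c0 : g.coeff 0 = L * (-(a*(b*c))) := by rw [cs]; norm_num
  -- normalize esymm indices
  have h0 : esymm (m+3) 0 κ = 1 := by simp [esymm]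
  norm_num [h0] at e3 e2 e1 e0
  -- L equals the top descFactorial
  have hL3 : L = ((3 + m).descFactorial m : ℝ) := by rw [← c3, e3]
  have hd3pos : (0:ℝ) < ((3 + m).descFactorial m : ℝ) := by
    have : (3 + m).descFactorial m ≠ 0 := by
      simp [Nat.descFactorial_eq_factorial_mul_choose, Nat.factorial_ne_zero, Nat.choose_eq_zero_iff]
    have := Nat.pos_of_ne_zero this
    exact_mod_cast this
  -- ℕ arithmetic identities
  have hs2 : (2+m).choose m = (2+m).choose 2 := by
    have h := Nat.choose_symm (show 2 ≤ 2+m by omega)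
    rwa [show 2+m-2 = m from by omega] at h
  have hs3 : (3+m).choose m = (3+m).choose 3 := by
    have h := Nat.choose_symm (show 3 ≤ 3+m by omega)
    rwa [show 3+m-3 = m from by omega] at h
  have hs1 : (1+m).choose m = 1 + m := by
    have h := Nat.choose_symm (show 1 ≤ 1+m by omega)
    rw [show 1+m-1 = m from by omega] at h
    rw [h, Nat.choose_one_right]
  have id2 : ((m:ℝ)+3) * ((2+m).descFactorial m : ℝ) = 3 * ((3+m).descFactorial m : ℝ) := by
    have h : (m+3) * ((2+m).choose 2) = (m+3).choose 3 * 3 := by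
      rw [show 2+m = m+2 from by omega]; exact Nat.add_one_mul_choose_eq (m+2) 2
    have : (m+3) * ((2+m).descFactorial m) = 3 * ((3+m).descFactorial m) := by
      rw [Nat.descFactorial_eq_factorial_mul_choose, Nat.descFactorial_eq_factorial_mul_choose,
        hs2, hs3]
      calc (m+3) * (m.factorial * (2+m).choose 2) = m.factorial * ((m+3) * ((2+m).choose 2)) := by
            ring
        _ = m.factorial * ((m+3).choose 3 * 3) := by rw [h]
        _ = 3 * (m.factorial * (3+m).choose 3) := by rw [show (3+m) = (m+3) from by omega]; ring
    exact_mod_cast this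
  have id1 : (((m+3).choose 2 : ℕ):ℝ) * ((1+m).descFactorial m : ℝ)
      = 3 * ((3+m).descFactorial m : ℝ) := by
    have h := Nat.choose_succ_right_eq (m+3) 2
    have : ((m+3).choose 2) * ((1+m).descFactorial m) = 3 * ((3+m).descFactorial m) := by
      rw [Nat.descFactorial_eq_factorial_mul_choose, Nat.descFactorial_eq_factorial_mul_choose,
        hs1, hs3]
      calc (m+3).choose 2 * (m.factorial * (1+m)) = m.factorial * ((m+3).choose 2 * (m+3-2)) := by
            rw [show m+3-2 = 1+m from by omega]; ring
        _ = m.factorial * ((m+3).choose 3 * 3) := by rw [← h]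
        _ = 3 * (m.factorial * (3+m).choose 3) := by rw [show (3+m) = (m+3) from by omega]; ring
    exact_mod_cast this
  have id0 : (((m+3).choose 3 : ℕ):ℝ) * ((m).descFactorial m : ℝ)
      = ((3+m).descFactorial m : ℝ) := by
    have : ((m+3).choose 3) * ((m).descFactorial m) = ((3+m).descFactorial m) := by
      rw [Nat.descFactorial_self, Nat.descFactorial_eq_factorial_mul_choose, hs3,
        show (3+m) = (m+3) from by omega]
      ring
    exact_mod_cast this
  have he2 : ((2+m).descFactorial m : ℝ) * esymm (m+3) 1 κ
      = ((3+m).descFactorial m : ℝ) * (-(a+b+c)) := by rw [← e2, c2, hL3]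
  have he1 : ((1+m).descFactorial m : ℝ) * esymm (m+3) 2 κ
      = ((3+m).descFactorial m : ℝ) * (a*b+(b*c+a*c)) := by rw [← e1, c1, hL3]
  have he0 : ((m).descFactorial m : ℝ) * esymm (m+3) 3 κ
      = ((3+m).descFactorial m : ℝ) * (-(a*(b*c))) := by rw [← e0, c0, hL3]
  have hDF3 : ((3 + m).descFactorial m : ℝ) ≠ 0 := ne_of_gt hd3pos
  refine ⟨a, b, c, ?_, ?_, ?_⟩
  · have key : (3:ℝ) * esymm (m+3) 1 κ = ((m:ℝ)+3) * (-(a+b+c)) := by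
      apply mul_left_cancel₀ hDF3
      linear_combination ((m:ℝ)+3) * he2 - esymm (m+3) 1 κ * id2
    have hch : (((m+3).choose 1 : ℕ):ℝ) = (m:ℝ)+3 := by rw [Nat.choose_one_right]; push_cast; ring
    rw [pnorm, hch]
    rw [div_eq_div_iff (by positivity) (by norm_num : (3:ℝ) ≠ 0)]
    linarith [key]
  · have hchpos : (0:ℝ) < (((m+3).choose 2 : ℕ):ℝ) := by
      exact_mod_cast Nat.choose_pos (by omega : 2 ≤ m+3)
    have key : (3:ℝ) * esymm (m+3) 2 κ = (((m+3).choose 2 : ℕ):ℝ) * (a*b+(b*c+a*c)) := by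
      apply mul_left_cancel₀ hDF3
      linear_combination (((m+3).choose 2 : ℕ):ℝ) * he1 - esymm (m+3) 2 κ * id1
    rw [pnorm]
    rw [div_eq_div_iff (by positivity) (by norm_num : (3:ℝ) ≠ 0)]
    linarith [key]
  · have hchpos : (0:ℝ) < (((m+3).choose 3 : ℕ):ℝ) := by
      exact_mod_cast Nat.choose_pos (by omega : 3 ≤ m+3)
    have key : esymm (m+3) 3 κ = (((m+3).choose 3 : ℕ):ℝ) * (-(a*(b*c))) := by
      apply mul_left_cancel₀ hDF3
      linear_combination (((m+3).choose 3 : ℕ):ℝ) * he0 - esymm (m+3) 3 κ * id0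
    rw [pnorm, key]
    field_simp

lemma newton_ineq (n : ℕ) (hn : 3 ≤ n) (κ : Fin n → ℝ) :
    pnorm n 2 κ ≤ (pnorm n 1 κ)^2 ∧ pnorm n 1 κ * pnorm n 3 κ ≤ (pnorm n 2 κ)^2 := by
  obtain ⟨m, rfl⟩ : ∃ m, n = m + 3 := ⟨n - 3, by omega⟩
  obtain ⟨a, b, c, h1, h2, h3⟩ := cubic_reduce m κ
  rw [h1, h2, h3]
  constructor
  · nlinarith [sq_nonneg (a-b), sq_nonneg (b-c), sq_nonneg (a-c)]
  · nlinarith [sq_nonneg (a*b-b*c), sq_nonneg (b*c-a*c), sq_nonneg (a*b-a*c)]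


/-- For κ ∈ Γ₂⁺ and F = p₂^{1/2}:
(n p₁ p₂ − (n−2) p₃ − 2 p₂^{3/2}) / (2 p₂^{3/2}) ≥ (n/2)(p₁/p₂^{1/2} − 1). -/
theorem stmt1 (n : ℕ) (hn : 2 ≤ n) (κ : Fin n → ℝ)
    (h1 : 0 < pnorm n 1 κ) (h2 : 0 < pnorm n 2 κ) :
    ((n : ℝ) * pnorm n 1 κ * pnorm n 2 κ - ((n : ℝ) - 2) * pnorm n 3 κ
        - 2 * (pnorm n 2 κ) ^ ((3 : ℝ) / 2)) / (2 * (pnorm n 2 κ) ^ ((3 : ℝ) / 2))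
      ≥ ((n : ℝ) / 2) * (pnorm n 1 κ / (pnorm n 2 κ) ^ ((1 : ℝ) / 2) - 1) := by
  set p1 := pnorm n 1 κ with hp1
  set p2 := pnorm n 2 κ with hp2
  set p3 := pnorm n 3 κ with hp3
  set s := p2 ^ ((1:ℝ)/2) with hsdef
  set t := p2 ^ ((3:ℝ)/2) with htdef
  have hs : 0 < s := Real.rpow_pos_of_pos h2 _
  have hs2 : s ^ 2 = p2 := by
    rw [hsdef, ← Real.rpow_natCast (p2 ^ ((1:ℝ)/2)) 2, ← Real.rpow_mul h2.le]
    norm_num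
  have ht : t = s ^ 3 := by
    rw [hsdef, htdef, ← Real.rpow_natCast (p2 ^ ((1:ℝ)/2)) 3, ← Real.rpow_mul h2.le]
    norm_num
  have key : ((n:ℝ) - 2) * p3 ≤ ((n:ℝ) - 2) * s ^ 3 := by
    rcases eq_or_lt_of_le hn with h | h
    · rw [← h]; norm_num
    · have hn3 : 3 ≤ n := h
      obtain ⟨hN1, hN2⟩ := newton_ineq n hn3 κ
      have hp1s : s ≤ p1 := by nlinarith [hs2, hN1]
      have hps3 : p3 ≤ s ^ 3 := by
        rcases le_or_gt p3 0 with hp | hp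
        · nlinarith [pow_pos hs 3]
        · have h4 : s * p3 ≤ p1 * p3 := mul_le_mul_of_nonneg_right hp1s hp.le
          have h5 : p1 * p3 ≤ s ^ 4 := by nlinarith [hN2, hs2]
          have : s * p3 ≤ s * s ^ 3 := by nlinarith
          exact le_of_mul_le_mul_left this hs
      have : (0:ℝ) ≤ (n:ℝ) - 2 := by
        have : (2:ℝ) ≤ (n:ℝ) := by exact_mod_cast hn
        linarith
      exact mul_le_mul_of_nonneg_left hps3 this
  have htpos : 0 < t := by rw [ht]; positivity
  rw [ge_iff_le, le_div_iff₀ (by positivity : (0:ℝ) < 2 * t)]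
  have hexp : ((n:ℝ) / 2) * (p1 / s - 1) * (2 * t) = (n:ℝ) * p1 * s ^ 2 - (n:ℝ) * s ^ 3 := by
    rw [ht]
    field_simp
  rw [hexp, ← hs2, ht]
  linarith [key]
end

section
/- Let κ ∈ ℝⁿ with all κᵢ > 0 and κ₁ = max κᵢ, κₙ = min κᵢ. Then there exists a constant C(n) > 0 depending only on n such that p₁(κ) − p₂(κ)^{1/2} ≥ C(n)·(κ₁ − κₙ)²/κ₁. -/
open Finset

lemma esymm_eval (n m : ℕ) (κ : Fin n → ℝ) :
    MvPolynomial.eval κ (MvPolynomial.esymm (Fin n) ℝ m) = esymm n m κ := by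
  simp [MvPolynomial.esymm, esymm, map_sum, MvPolynomial.eval_prod]

lemma esymm_one' (n : ℕ) (κ : Fin n → ℝ) : esymm n 1 κ = ∑ i, κ i := by
  simp [esymm, Finset.powersetCard_one, Finset.sum_map]

lemma newton2 (n : ℕ) (κ : Fin n → ℝ) :
    ∑ i, κ i ^ 2 = (∑ i, κ i) ^ 2 - 2 * esymm n 2 κ := by
  have h := MvPolynomial.psum_eq_mul_esymm_sub_sum (Fin n) ℝ 2 (by norm_num)
  have h2 : (Finset.HasAntidiagonal.antidiagonal 2 : Finset (ℕ × ℕ)).filter (fun a => a.1 ∈ Set.Ioo 0 2)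
      = {((1:ℕ),(1:ℕ))} := by decide
  rw [h2] at h
  have := congrArg (MvPolynomial.eval κ) h
  simp [MvPolynomial.psum, esymm_eval, MvPolynomial.esymm_one, map_sum] at this
  rw [this]; ring

lemma double_sum_sq (n : ℕ) (κ : Fin n → ℝ) :
    ∑ i, ∑ j, (κ i - κ j) ^ 2
      = 2 * ((n : ℝ) * (∑ i, κ i ^ 2) - (∑ i, κ i) ^ 2) := by
  simp only [sub_sq, Finset.sum_add_distrib, Finset.sum_sub_distrib, ← Finset.mul_sum,
    ← Finset.sum_mul, Finset.sum_const, Finset.card_univ, Fintype.card_fin, nsmul_eq_mul]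
  ring

/-- For positive κ with maximum κ a and minimum κ b, there is C(n) > 0 with
p₁ − p₂^{1/2} ≥ C(n)·(κ₁ − κₙ)²/κ₁. -/
theorem stmt5 (n : ℕ) (hn : 2 ≤ n) :
    ∃ C : ℝ, 0 < C ∧ ∀ κ : Fin n → ℝ, (∀ i, 0 < κ i) →
      ∀ a b : Fin n, (∀ i, κ i ≤ κ a) → (∀ i, κ b ≤ κ i) →
      pnorm n 1 κ - Real.sqrt (pnorm n 2 κ) ≥ C * (κ a - κ b) ^ 2 / κ a := by
  have hn2 : (2 : ℝ) ≤ (n : ℝ) := by exact_mod_cast hn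
  have hnpos : (0 : ℝ) < n := by linarith
  have hn1 : (0 : ℝ) < (n : ℝ) - 1 := by linarith
  refine ⟨1 / (2 * (n : ℝ) ^ 2 * ((n : ℝ) - 1)), by positivity, ?_⟩
  intro κ hκ a b ha hb
  set S1 := ∑ i, κ i with hS1def
  set S2 := ∑ i, κ i ^ 2 with hS2def
  set Q := (κ a - κ b) ^ 2 with hQdef
  have hκa : 0 < κ a := hκ a
  -- p1
  have hp1 : pnorm n 1 κ = S1 / n := by
    rw [pnorm, esymm_one', Nat.choose_one_right]
  have hS1pos : 0 < S1 := Finset.sum_pos (fun i _ => hκ i) (by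
    simpa using Finset.univ_nonempty_iff.2 (Fin.pos_iff_nonempty.mp (by omega)))
  have hp1pos : 0 < pnorm n 1 κ := by rw [hp1]; positivity
  have hS1le : S1 ≤ n * κ a := by
    calc S1 ≤ ∑ _i : Fin n, κ a := Finset.sum_le_sum (fun i _ => ha i)
    _ = n * κ a := by simp [mul_comm]
  have hp1le : pnorm n 1 κ ≤ κ a := by
    rw [hp1, div_le_iff₀ hnpos]; linarith [hS1le]
  -- key: n*S2 - S1^2 ≥ Q
  have hD : (n : ℝ) * S2 - S1 ^ 2 ≥ Q := by
    have hds := double_sum_sq n κ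
    by_cases hab : a = b
    · have hQ0 : Q = 0 := by simp [hQdef, hab]
      have : (0:ℝ) ≤ ∑ i, ∑ j, (κ i - κ j) ^ 2 :=
        Finset.sum_nonneg fun i _ => Finset.sum_nonneg fun j _ => sq_nonneg _
      rw [hQ0]; nlinarith
    · have h1 : ∀ i : Fin n, (κ i - κ b)^2 + (κ i - κ a)^2 ≤ ∑ j, (κ i - κ j) ^ 2 := by
        intro i
        have := Finset.sum_le_sum_of_subset_of_nonneg
          (Finset.subset_univ ({b, a} : Finset (Fin n)))
          (fun j _ _ => sq_nonneg (κ i - κ j))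
        rwa [Finset.sum_pair (Ne.symm hab)] at this
      have h2 : Q + Q ≤ ∑ i, ∑ j, (κ i - κ j) ^ 2 := by
        have h3 := Finset.sum_le_sum_of_subset_of_nonneg (f := fun i => ∑ j, (κ i - κ j) ^ 2)
          (Finset.subset_univ ({a, b} : Finset (Fin n)))
          (fun i _ _ => Finset.sum_nonneg fun j _ => sq_nonneg (κ i - κ j))
        rw [Finset.sum_pair hab] at h3
        have ha' := h1 a
        have hb' := h1 b
        have : (κ b - κ a)^2 = Q := by rw [hQdef]; ring
        nlinarith [sq_nonneg (κ a - κ a), sq_nonneg (κ b - κ b)]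
      nlinarith
  -- p2
  have hchoose2 : ((n.choose 2 : ℕ) : ℝ) = (n : ℝ) * ((n : ℝ) - 1) / 2 :=
    Nat.cast_choose_two (K := ℝ) n
  have hp2 : pnorm n 2 κ = (S1 ^ 2 - S2) / ((n : ℝ) * ((n : ℝ) - 1)) := by
    rw [pnorm, hchoose2]
    have hE2 : esymm n 2 κ = (S1 ^ 2 - S2) / 2 := by
      have := newton2 n κ; rw [← hS1def, ← hS2def] at this; linarith
    rw [hE2]; field_simp
  have hdiff : pnorm n 1 κ ^ 2 - pnorm n 2 κ
      = ((n : ℝ) * S2 - S1 ^ 2) / ((n : ℝ) ^ 2 * ((n : ℝ) - 1)) := by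
    rw [hp1, hp2]; field_simp; ring
  have hQnn : (0:ℝ) ≤ Q := sq_nonneg _
  have hdiffge : pnorm n 1 κ ^ 2 - pnorm n 2 κ ≥ Q / ((n : ℝ) ^ 2 * ((n : ℝ) - 1)) := by
    rw [hdiff, ge_iff_le]
    gcongr
  -- final step
  set p1 := pnorm n 1 κ
  set p2 := pnorm n 2 κ
  have hp2nn : 0 ≤ p2 := by
    have hE2nn : 0 ≤ esymm n 2 κ := Finset.sum_nonneg fun s _ =>
      Finset.prod_nonneg fun i _ => (hκ i).le
    exact div_nonneg hE2nn (by positivity)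
  have hp2le : p2 ≤ p1 ^ 2 := by
    have := div_nonneg hQnn (by positivity : (0:ℝ) ≤ (n:ℝ)^2 * ((n:ℝ)-1))
    linarith [hdiffge]
  have hsqrt : Real.sqrt p2 ≤ p1 := by
    calc Real.sqrt p2 ≤ Real.sqrt (p1 ^ 2) := Real.sqrt_le_sqrt hp2le
    _ = p1 := by rw [Real.sqrt_sq hp1pos.le]
  have hsqrtnn : 0 ≤ Real.sqrt p2 := Real.sqrt_nonneg _
  have hfact : (p1 - Real.sqrt p2) * (p1 + Real.sqrt p2) = p1 ^ 2 - p2 := by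
    linear_combination - Real.sq_sqrt hp2nn
  rw [ge_iff_le, div_le_iff₀ hκa]
  have hXnn : 0 ≤ p1 - Real.sqrt p2 := by linarith
  have hmul : p1 ^ 2 - p2 ≤ (p1 - Real.sqrt p2) * κ a * 2 := by
    calc p1 ^ 2 - p2 = (p1 - Real.sqrt p2) * (p1 + Real.sqrt p2) := hfact.symm
    _ ≤ (p1 - Real.sqrt p2) * (2 * κ a) :=
        mul_le_mul_of_nonneg_left (by linarith) hXnn
    _ = (p1 - Real.sqrt p2) * κ a * 2 := by ring
  have heq : 1 / (2 * (n : ℝ) ^ 2 * ((n : ℝ) - 1)) * Q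
      = (Q / ((n : ℝ) ^ 2 * ((n : ℝ) - 1))) / 2 := by
    field_simp
  rw [heq]
  linarith [hdiffge, hmul]
end

section
/- Let F = pₖ/p_{k−1} with 1 ≤ k ≤ n, viewed as a function of κ ∈ Γₖ⁺ (where p₁,...,pₖ > 0). Then 1 ≤ Σᵢ ∂F/∂κᵢ ≤ k. Explicitly, Σᵢ ∂F/∂κᵢ = k − (k−1)·p_{k−2}pₖ/p_{k−1}², which lies in [1, k] by the Newton–MacLaurin inequality p_{k−2}pₖ ≤ p_{k−1}². -/
open Finset

/-- The partial derivative ∂F/∂κᵢ at κ. -/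
noncomputable def partialDeriv (n : ℕ) (F : (Fin n → ℝ) → ℝ) (κ : Fin n → ℝ)
    (i : Fin n) : ℝ :=
  deriv (fun t => F (Function.update κ i t)) (κ i)

noncomputable def Aco (n m : ℕ) (κ : Fin n → ℝ) (i : Fin n) : ℝ :=
  ∑ s ∈ (powersetCard m (univ : Finset (Fin n))).filter (fun s => ¬ i ∈ s),
    ∏ j ∈ s, κ j

noncomputable def Bco (n m : ℕ) (κ : Fin n → ℝ) (i : Fin n) : ℝ :=
  ∑ s ∈ (powersetCard m (univ : Finset (Fin n))).filter (fun s => i ∈ s),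
    ∏ j ∈ s.erase i, κ j

lemma esymm_update (n m : ℕ) (κ : Fin n → ℝ) (i : Fin n) (t : ℝ) :
    esymm n m (Function.update κ i t) = Aco n m κ i + t * Bco n m κ i := by
  rw [esymm, ← Finset.sum_filter_add_sum_filter_not (powersetCard m univ) (fun s => i ∈ s),
    add_comm]
  congr 1
  · refine Finset.sum_congr rfl fun s hs => Finset.prod_congr rfl fun j hj => ?_
    have hij : j ≠ i := fun h => (Finset.mem_filter.1 hs).2 (h ▸ hj)
    exact Function.update_of_ne hij t κ
  · rw [Bco, Finset.mul_sum]
    refine Finset.sum_congr rfl fun s hs => ?_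
    have hi : i ∈ s := (Finset.mem_filter.1 hs).2
    rw [← Finset.mul_prod_erase s _ hi, Function.update_self]
    congr 1
    exact Finset.prod_congr rfl fun j hj =>
      Function.update_of_ne (Finset.ne_of_mem_erase hj) t κ

lemma esymm_eq_Aco_add (n m : ℕ) (κ : Fin n → ℝ) (i : Fin n) :
    esymm n m κ = Aco n m κ i + κ i * Bco n m κ i := by
  have := esymm_update n m κ i (κ i)
  rwa [Function.update_eq_self] at this

lemma hasDerivAt_pnorm (n m : ℕ) (κ : Fin n → ℝ) (i : Fin n) (t : ℝ) :
    HasDerivAt (fun t => pnorm n m (Function.update κ i t))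
      (Bco n m κ i / (n.choose m : ℝ)) t := by
  have h : (fun t => pnorm n m (Function.update κ i t))
      = fun t => (Aco n m κ i + t * Bco n m κ i) / (n.choose m : ℝ) := by
    funext t; rw [pnorm, esymm_update]
  rw [h]
  simpa using (((hasDerivAt_id t).mul_const (Bco n m κ i)).const_add (Aco n m κ i)).div_const ((n.choose m : ℝ))

lemma pnorm_update_self (n m : ℕ) (κ : Fin n → ℝ) (i : Fin n) :
    pnorm n m (Function.update κ i (κ i)) = pnorm n m κ := by
  rw [Function.update_eq_self]

lemma partialDeriv_quot (n k : ℕ) (κ : Fin n → ℝ) (i : Fin n)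
    (h : pnorm n (k-1) κ ≠ 0) :
    partialDeriv n (fun μ => pnorm n k μ / pnorm n (k-1) μ) κ i
      = (Bco n k κ i / (n.choose k : ℝ) * pnorm n (k-1) κ
          - pnorm n k κ * (Bco n (k-1) κ i / (n.choose (k-1) : ℝ)))
        / (pnorm n (k-1) κ) ^ 2 := by
  have hu := hasDerivAt_pnorm n k κ i (κ i)
  have hv := hasDerivAt_pnorm n (k-1) κ i (κ i)
  have hvne : pnorm n (k-1) (Function.update κ i (κ i)) ≠ 0 := by
    rwa [Function.update_eq_self]
  have := (hu.div hv hvne).deriv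
  rw [Function.update_eq_self] at this
  rw [partialDeriv]
  exact this

lemma sum_Bco (n m : ℕ) (hm : 1 ≤ m) (κ : Fin n → ℝ) :
    ∑ i, Bco n m κ i = ((n - (m-1) : ℕ) : ℝ) * esymm n (m-1) κ := by
  classical
  have h1 : ∑ i, Bco n m κ i
      = ∑ p ∈ (univ : Finset (Fin n)).sigma
          (fun i => (powersetCard m (univ : Finset (Fin n))).filter (fun s => i ∈ s)),
          ∏ j ∈ p.2.erase p.1, κ j := by
    rw [Finset.sum_sigma]; rfl
  have h2 : ∑ q ∈ (powersetCard (m-1) (univ : Finset (Fin n))).sigma (fun u => uᶜ),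
        ∏ j ∈ q.1, κ j
      = ((n - (m-1) : ℕ) : ℝ) * esymm n (m-1) κ := by
    rw [Finset.sum_sigma, esymm, Finset.mul_sum]
    refine Finset.sum_congr rfl fun u hu => ?_
    dsimp only
    rw [Finset.sum_const, nsmul_eq_mul, Finset.card_compl, Fintype.card_fin,
      Finset.mem_powersetCard_univ.1 hu]
  rw [h1, ← h2]
  refine Finset.sum_nbij' (fun p => ⟨p.2.erase p.1, p.1⟩) (fun q => ⟨q.2, insert q.2 q.1⟩)
    ?_ ?_ ?_ ?_ ?_
  · rintro ⟨i, s⟩ hp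
    simp only [Finset.mem_sigma, Finset.mem_filter, Finset.mem_powersetCard_univ] at hp ⊢
    obtain ⟨-, hs, his⟩ := hp
    exact ⟨by rw [Finset.card_erase_of_mem his, hs], Finset.mem_compl.2 (Finset.notMem_erase _ _)⟩
  · rintro ⟨u, j⟩ hq
    simp only [Finset.mem_sigma, Finset.mem_filter, Finset.mem_powersetCard_univ,
      Finset.mem_compl] at hq ⊢
    obtain ⟨hu, hj⟩ := hq
    refine ⟨Finset.mem_univ _, ?_, Finset.mem_insert_self _ _⟩
    rw [Finset.card_insert_of_notMem hj, hu]
    omega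
  · rintro ⟨i, s⟩ hp
    simp only [Finset.mem_sigma, Finset.mem_filter] at hp
    simp [Finset.insert_erase hp.2.2]
  · rintro ⟨u, j⟩ hq
    simp only [Finset.mem_sigma, Finset.mem_compl] at hq
    simp [Finset.erase_insert hq.2]
  · rintro ⟨i, s⟩ _; rfl

lemma sum_Bco_div (n m : ℕ) (hmn : m ≤ n) (κ : Fin n → ℝ) :
    (∑ i, Bco n m κ i) / (n.choose m : ℝ) = (m : ℝ) * pnorm n (m-1) κ := by
  rcases Nat.eq_zero_or_pos m with rfl | hm
  · simp only [Nat.cast_zero, zero_mul]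
    have : ∀ i : Fin n, Bco n 0 κ i = 0 := by
      intro i
      rw [Bco]
      convert Finset.sum_empty
      rw [Finset.powersetCard_zero]
      ext s
      simp only [Finset.mem_filter, Finset.mem_singleton, Finset.notMem_empty, iff_false,
        not_and]
      rintro rfl
      exact Finset.notMem_empty i
    simp [this]
  · rw [sum_Bco n m hm κ, pnorm]
    have hc1 : 0 < n.choose m := Nat.choose_pos hmn
    have hc2 : 0 < n.choose (m-1) := Nat.choose_pos (le_trans (Nat.sub_le _ _) hmn)
    have key : (n.choose m) * m = n.choose (m-1) * (n - (m-1)) := by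
      have h := Nat.choose_succ_right_eq n (m-1)
      have hm1 : m - 1 + 1 = m := Nat.succ_pred_eq_of_pos hm
      rwa [hm1] at h
    have hkey : ((n.choose m : ℝ)) * m = (n.choose (m-1) : ℝ) * ((n - (m-1) : ℕ) : ℝ) := by
      exact_mod_cast congrArg (Nat.cast : ℕ → ℝ) key
    have c1 : (n.choose m : ℝ) ≠ 0 := by exact_mod_cast hc1.ne'
    have c2 : (n.choose (m-1) : ℝ) ≠ 0 := by exact_mod_cast hc2.ne'
    field_simp
    linear_combination (- esymm n (m-1) κ) * hkey

lemma esymm_top (N : ℕ) (f : Fin N → ℝ) : esymm N N f = ∏ j, f j := by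
  have h := Finset.powersetCard_self (univ : Finset (Fin N))
  rw [Finset.card_univ, Fintype.card_fin] at h
  rw [esymm, h, Finset.sum_singleton]

lemma esymm_pred (N : ℕ) (hN : 1 ≤ N) (f : Fin N → ℝ) :
    esymm N (N-1) f = ∑ i, ∏ j ∈ univ.erase i, f j := by
  classical
  have himg : (univ : Finset (Fin N)).image (fun i => univ.erase i)
      = powersetCard (N-1) (univ : Finset (Fin N)) := by
    ext s
    simp only [Finset.mem_image, Finset.mem_powersetCard_univ]
    constructor
    · rintro ⟨i, -, rfl⟩
      rw [Finset.card_erase_of_mem (Finset.mem_univ i), Finset.card_fin]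
    · intro hs
      have hc : #sᶜ = 1 := by
        rw [Finset.card_compl, Fintype.card_fin, hs]
        omega
      obtain ⟨a, ha⟩ := Finset.card_eq_one.1 hc
      refine ⟨a, Finset.mem_univ a, ?_⟩
      rw [← Finset.compl_singleton, ← ha, compl_compl]
  have hinj : ∀ i ∈ (univ : Finset (Fin N)), ∀ j ∈ (univ : Finset (Fin N)),
      univ.erase i = univ.erase j → i = j := by
    intro i _ j _ h
    by_contra hne
    have : i ∈ univ.erase j := Finset.mem_erase.2 ⟨hne, Finset.mem_univ i⟩
    rw [← h] at this
    exact (Finset.mem_erase.1 this).1 rfl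
  rw [esymm, ← himg, Finset.sum_image hinj]

lemma prod_erase_pair (N : ℕ) (f : Fin N → ℝ) (i j : Fin N) (hij : j ≠ i) :
    (∏ l ∈ univ.erase i, f l) * ∏ l ∈ univ.erase j, f l
      = (∏ l, f l) * ∏ l ∈ ({i, j} : Finset (Fin N))ᶜ, f l := by
  classical
  have hcompl : ({i, j} : Finset (Fin N))ᶜ = (univ.erase j).erase i := by
    rw [show ({i,j} : Finset (Fin N)) = insert i {j} from rfl, Finset.compl_insert,
      Finset.compl_singleton]
  have hee : (univ.erase i).erase j = (univ.erase j).erase i := Finset.erase_right_comm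
  have h1 : ∏ l ∈ univ.erase i, f l = f j * ∏ l ∈ (univ.erase i).erase j, f l :=
    (Finset.mul_prod_erase _ _ (Finset.mem_erase.2 ⟨hij, Finset.mem_univ j⟩)).symm
  have h2 : ∏ l ∈ univ.erase j, f l = f i * ∏ l ∈ (univ.erase j).erase i, f l :=
    (Finset.mul_prod_erase _ _ (Finset.mem_erase.2 ⟨fun h => hij h.symm, Finset.mem_univ i⟩)).symm
  have h3 : ∏ l, f l = f i * ∏ l ∈ univ.erase i, f l :=
    (Finset.mul_prod_erase _ _ (Finset.mem_univ i)).symm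
  rw [hcompl]
  rw [h1, hee, h2]
  rw [h3, h1, hee]
  ring

lemma sum_offdiag_prods (N : ℕ) (hN2 : 2 ≤ N) (f : Fin N → ℝ) :
    ∑ p ∈ (univ : Finset (Fin N)).sigma (fun i => univ.erase i),
        ∏ l ∈ ({p.1, p.2} : Finset (Fin N))ᶜ, f l
      = 2 * esymm N (N-2) f := by
  classical
  set S := (univ : Finset (Fin N)).sigma (fun i => univ.erase i) with hS
  set φ : ((_ : Fin N) × Fin N) → Finset (Fin N) := fun p => ({p.1, p.2} : Finset (Fin N))ᶜ
    with hφ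
  have himg : S.image φ = powersetCard (N-2) (univ : Finset (Fin N)) := by
    ext u
    simp only [Finset.mem_image, Finset.mem_powersetCard_univ]
    constructor
    · rintro ⟨p, hp, rfl⟩
      have hne : p.2 ≠ p.1 := (Finset.mem_erase.1 (Finset.mem_sigma.1 hp).2).1
      rw [hφ, Finset.card_compl, Fintype.card_fin, Finset.card_insert_of_notMem
        (by simp [hne.symm]), Finset.card_singleton]
    · intro hu
      have hc : #uᶜ = 2 := by
        rw [Finset.card_compl, Fintype.card_fin, hu]
        omega
      obtain ⟨a, b, hab, hab2⟩ := Finset.card_eq_two.1 hc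
      refine ⟨⟨a, b⟩, Finset.mem_sigma.2 ⟨Finset.mem_univ a,
        Finset.mem_erase.2 ⟨hab.symm, Finset.mem_univ b⟩⟩, ?_⟩
      show ({a, b} : Finset (Fin N))ᶜ = u
      rw [← hab2, compl_compl]
  have hfib : ∀ u ∈ S.image φ, #(S.filter (fun p => φ p = u)) = 2 := by
    intro u hu
    rw [himg, Finset.mem_powersetCard_univ] at hu
    have hc : #uᶜ = 2 := by
      rw [Finset.card_compl, Fintype.card_fin, hu]
      omega
    obtain ⟨a, b, hab, hab2⟩ := Finset.card_eq_two.1 hc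
    have hset : S.filter (fun p => φ p = u) = {⟨a, b⟩, ⟨b, a⟩} := by
      ext p
      rw [Finset.mem_filter, Finset.mem_insert, Finset.mem_singleton]
      constructor
      · rintro ⟨hpS, hpu⟩
        have hne : p.2 ≠ p.1 := (Finset.mem_erase.1 (Finset.mem_sigma.1 hpS).2).1
        have hpair : ({p.1, p.2} : Finset (Fin N)) = {a, b} := by
          rw [← hab2, ← hpu, hφ, compl_compl]
        have h1 : p.1 ∈ ({a, b} : Finset (Fin N)) := by
          rw [← hpair]; exact Finset.mem_insert_self _ _
        have h2 : p.2 ∈ ({a, b} : Finset (Fin N)) := by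
          rw [← hpair]; exact Finset.mem_insert_of_mem (Finset.mem_singleton_self _)
        rw [Finset.mem_insert, Finset.mem_singleton] at h1 h2
        obtain ⟨p1, p2⟩ := p
        simp only at h1 h2 hne ⊢
        rcases h1 with h1 | h1 <;> rcases h2 with h2 | h2
        · exact absurd (h2.trans h1.symm) hne
        · left; rw [h1, h2]
        · right; rw [h1, h2]
        · exact absurd (h2.trans h1.symm) hne
      · rintro (rfl | rfl)
        · exact ⟨Finset.mem_sigma.2 ⟨Finset.mem_univ a,
            Finset.mem_erase.2 ⟨hab.symm, Finset.mem_univ b⟩⟩,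
            by show ({a, b} : Finset (Fin N))ᶜ = u; rw [← hab2, compl_compl]⟩
        · refine ⟨Finset.mem_sigma.2 ⟨Finset.mem_univ b,
            Finset.mem_erase.2 ⟨hab, Finset.mem_univ a⟩⟩, ?_⟩
          show ({b, a} : Finset (Fin N))ᶜ = u
          rw [Finset.pair_comm b a, ← hab2, compl_compl]
    rw [hset, Finset.card_insert_of_notMem (by simp [hab]), Finset.card_singleton]
  have := Finset.sum_comp (fun u => ∏ l ∈ u, f l) φ (s := S)
  rw [hφ] at this
  rw [this]
  rw [Finset.sum_congr rfl (fun u hu => by rw [hfib u hu])]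
  rw [esymm, ← himg]
  rw [Finset.mul_sum]
  exact Finset.sum_congr rfl fun u _ => by rw [two_smul, two_mul]

lemma newton_base (N : ℕ) (hN2 : 2 ≤ N) (f : Fin N → ℝ) :
    pnorm N (N-2) f * pnorm N N f ≤ pnorm N (N-1) f ^ 2 := by
  classical
  set P : Fin N → ℝ := fun i => ∏ j ∈ univ.erase i, f j with hP
  set S := ∑ i, P i with hSdef
  set T := ∑ i, P i ^ 2 with hTdef
  have h1 : esymm N (N-1) f = S := esymm_pred N (by omega) f
  have hkey : S ^ 2 - T = 2 * (esymm N (N-2) f * esymm N N f) := by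
    have e1 : S ^ 2 = T + ∑ p ∈ (univ : Finset (Fin N)).sigma (fun i => univ.erase i),
        P p.1 * P p.2 := by
      rw [sq, hSdef, Finset.sum_mul_sum]
      rw [Finset.sum_sigma]
      rw [← Finset.sum_add_distrib]
      refine Finset.sum_congr rfl fun i _ => ?_
      dsimp only
      rw [← Finset.add_sum_erase _ (fun j => P i * P j) (Finset.mem_univ i), sq]
    have e2 : ∑ p ∈ (univ : Finset (Fin N)).sigma (fun i => univ.erase i), P p.1 * P p.2
        = esymm N N f * (2 * esymm N (N-2) f) := by
      rw [← sum_offdiag_prods N hN2 f, Finset.mul_sum]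
      refine Finset.sum_congr rfl fun p hp => ?_
      have hne : p.2 ≠ p.1 := (Finset.mem_erase.1 (Finset.mem_sigma.1 hp).2).1
      have := prod_erase_pair N f p.1 p.2 hne
      rw [hP, esymm_top]
      exact this
    rw [e1, e2]
    ring
  have hcs : S ^ 2 ≤ (N : ℝ) * T := by
    have := sq_sum_le_card_mul_sum_sq (s := (univ : Finset (Fin N))) (f := P)
    simpa [Finset.card_univ] using this
  have hchooseN : (N.choose N : ℝ) = 1 := by rw [Nat.choose_self]; norm_num
  have hchoose1 : (N.choose (N-1) : ℝ) = (N : ℝ) := by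
    rw [show N - 1 = N - 1 from rfl, Nat.choose_symm (by omega : 1 ≤ N), Nat.choose_one_right]
  have hchoose2 : ((N.choose (N-2) : ℕ) : ℝ) = (N.choose 2 : ℝ) := by
    rw [Nat.choose_symm (by omega : 2 ≤ N)]
  have hC2 : ((N.choose 2 : ℕ) : ℝ) * 2 = (N : ℝ) * ((N : ℝ) - 1) := by
    have h := Nat.choose_succ_right_eq N 1
    rw [Nat.choose_one_right] at h
    have : ((N.choose 2 : ℕ) : ℝ) * 2 = (N : ℝ) * (((N - 1 : ℕ) : ℕ) : ℝ) := by
      exact_mod_cast congrArg (Nat.cast : ℕ → ℝ) h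
    rw [this, Nat.cast_sub (by omega : 1 ≤ N)]
    norm_num
  have hC2pos : (0 : ℝ) < (N.choose 2 : ℝ) := by
    exact_mod_cast Nat.choose_pos (by omega : 2 ≤ N)
  have hNpos : (0 : ℝ) < (N : ℝ) := by positivity
  rw [pnorm, pnorm, pnorm, h1, hchooseN, hchoose2, hchoose1, div_one]
  rw [div_pow, div_mul_eq_mul_div, div_le_div_iff₀ hC2pos (by positivity)]
  have hN2' : (2 : ℝ) ≤ (N : ℝ) := by exact_mod_cast hN2
  nlinarith [mul_le_mul_of_nonneg_left hcs hNpos.le, sq_nonneg S]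

open Polynomial in
lemma multiset_esymm_deriv (N : ℕ) (hN : 1 ≤ N) (s : Multiset ℝ) (hs : Multiset.card s = N) :
    ∃ μ : Multiset ℝ, Multiset.card μ = N - 1 ∧
      ∀ j, j ≤ N - 1 → (N : ℝ) * μ.esymm j = ((N - j : ℕ) : ℝ) * s.esymm j := by
  classical
  set Pp : Polynomial ℝ := (s.map (fun a => X - C a)).prod with hPp
  have hmem : ∀ p ∈ s.map (fun a => X - C a), p.Monic := by
    intro p hp
    obtain ⟨a, -, rfl⟩ := Multiset.mem_map.1 hp
    exact monic_X_sub_C a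
  have hmonic : Pp.Monic :=
    monic_multiset_prod_of_monic s (fun a => X - C a) (fun a _ => monic_X_sub_C a)
  have hdeg : Pp.natDegree = N := by
    rw [hPp, natDegree_multiset_prod_of_monic _ hmem, Multiset.map_map]
    have : (fun p => natDegree p) ∘ (fun a : ℝ => X - C a) = Function.const ℝ 1 := by
      funext a
      simp [natDegree_X_sub_C]
    rw [this, Multiset.map_const, Multiset.sum_replicate, hs, smul_eq_mul, mul_one]
  have hroots : Pp.roots = s := roots_multiset_prod_X_sub_C s
  set D := derivative Pp with hD
  have hNcast : ((N - 1 : ℕ) : ℝ) + 1 = (N : ℝ) := by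
    rw [Nat.cast_sub hN]; ring
  have hcoD : D.coeff (N-1) = (N : ℝ) := by
    rw [hD, coeff_derivative, show N - 1 + 1 = N from by omega]
    have : Pp.coeff N = 1 := by
      rw [← hdeg]; exact hmonic.coeff_natDegree
    rw [this, one_mul, hNcast]
  have hNne : (N : ℝ) ≠ 0 := Nat.cast_ne_zero.2 (by omega)
  have hcoDne : D.coeff (N-1) ≠ 0 := by rw [hcoD]; exact hNne
  have hDdeg : D.natDegree = N - 1 := by
    refine le_antisymm ?_ (le_natDegree_of_ne_zero hcoDne)
    have h := natDegree_derivative_le Pp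
    rw [hdeg, ← hD] at h
    exact h
  have hDlead : D.leadingCoeff = (N : ℝ) := by
    rw [leadingCoeff, hDdeg, hcoD]
  have hcardroots : Multiset.card D.roots = N - 1 := by
    have h1 : Multiset.card D.roots ≤ N - 1 := by
      have := card_roots' D
      omega
    have h2 : Multiset.card Pp.roots ≤ Multiset.card D.roots + 1 :=
      card_roots_le_derivative Pp
    rw [hroots, hs] at h2
    omega
  refine ⟨D.roots, hcardroots, fun j hj => ?_⟩
  have hcard' : Multiset.card D.roots = D.natDegree := by rw [hcardroots, hDdeg]
  have hk : N - 1 - j ≤ D.natDegree := by rw [hDdeg]; omega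
  have c1 := coeff_eq_esymm_roots_of_card hcard' hk
  rw [hDlead, hDdeg, show N - 1 - (N - 1 - j) = j from by omega] at c1
  have c2 : D.coeff (N-1-j) = Pp.coeff (N - j) * ((N - j : ℕ) : ℝ) := by
    rw [hD, coeff_derivative, show N - 1 - j + 1 = N - j from by omega]
    congr 1
    have : ((N - 1 - j : ℕ) : ℝ) = ((N - j : ℕ) : ℝ) - 1 := by
      rw [Nat.cast_sub (by omega : j ≤ N - 1), Nat.cast_sub (by omega : j ≤ N),
        Nat.cast_sub hN]
      ring
    rw [this]; ring
  have c3 : Pp.coeff (N - j) = (-1) ^ j * s.esymm j := by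
    have h := Multiset.prod_X_sub_C_coeff s (show N - j ≤ Multiset.card s by omega)
    rw [hs, show N - (N - j) = j from by omega] at h
    exact h
  rw [c2, c3] at c1
  have hpow : ((-1 : ℝ) ^ j) ≠ 0 := by
    apply pow_ne_zero; norm_num
  apply mul_left_cancel₀ hpow
  linear_combination -c1

lemma exists_fin_of_multiset (N : ℕ) (s : Multiset ℝ) (h : Multiset.card s = N) :
    ∃ f : Fin N → ℝ, Multiset.map f Finset.univ.val = s := by
  have hlen : s.toList.length = N := by rw [Multiset.length_toList, h]
  refine ⟨fun i => s.toList.get (Fin.cast hlen.symm i), ?_⟩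
  rw [Fin.univ_val_map]
  have : List.ofFn (fun i : Fin N => s.toList.get (Fin.cast hlen.symm i)) = s.toList := by
    apply List.ext_getElem <;> simp [hlen]
  rw [this, Multiset.coe_toList]

lemma esymm_eq_multiset_esymm (n m : ℕ) (f : Fin n → ℝ) :
    esymm n m f = (Multiset.map f Finset.univ.val).esymm m := by
  rw [Finset.esymm_map_val]
  rfl

lemma newton (n : ℕ) : ∀ (m : ℕ) (κ : Fin n → ℝ),
    pnorm n m κ * pnorm n (m+2) κ ≤ pnorm n (m+1) κ ^ 2 := by
  induction n using Nat.strong_induction_on with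
  | _ n ih =>
    intro m κ
    rcases lt_trichotomy n (m+2) with hlt | heq | hgt
    · have h0 : esymm n (m+2) κ = 0 := by
        rw [esymm, Finset.powersetCard_eq_empty.2 (by simpa using hlt), Finset.sum_empty]
      rw [show pnorm n (m+2) κ = 0 from by rw [pnorm, h0, zero_div], mul_zero]
      positivity
    · subst heq
      have h := newton_base (m+2) (by omega) κ
      rw [show m+2-2 = m from by omega, show m+2-1 = m+1 from by omega] at h
      exact h
    · set s := Multiset.map κ (Finset.univ : Finset (Fin n)).val with hs
      have hcards : Multiset.card s = n := by
        rw [hs, Multiset.card_map]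
        simp
      obtain ⟨μ, hμcard, hμ⟩ := multiset_esymm_deriv n (by omega) s hcards
      obtain ⟨g, hg⟩ := exists_fin_of_multiset (n-1) μ hμcard
      have hpn : ∀ j, j ≤ n-1 → pnorm (n-1) j g = pnorm n j κ := by
        intro j hj
        rw [pnorm, pnorm, esymm_eq_multiset_esymm, hg, esymm_eq_multiset_esymm n j κ, ← hs]
        have hrel := hμ j hj
        have hCpos1 : (0:ℝ) < ((n-1).choose j : ℝ) := by
          exact_mod_cast Nat.choose_pos hj
        have hCpos2 : (0:ℝ) < (n.choose j : ℝ) := by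
          exact_mod_cast Nat.choose_pos (by omega : j ≤ n)
        have hC : (((n-1).choose j : ℕ) : ℝ) * (n : ℝ)
            = ((n.choose j : ℕ) : ℝ) * ((n - j : ℕ) : ℝ) := by
          have h := Nat.choose_mul_succ_eq (n-1) j
          rw [show n - 1 + 1 = n from by omega] at h
          exact_mod_cast congrArg (Nat.cast : ℕ → ℝ) h
        rw [div_eq_div_iff hCpos1.ne' hCpos2.ne']
        have hnne : (n:ℝ) ≠ 0 := Nat.cast_ne_zero.2 (by omega)
        apply mul_right_cancel₀ hnne
        linear_combination ((n.choose j : ℝ)) * hrel - (s.esymm j) * hC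
      have h := ih (n-1) (by omega) m g
      rw [hpn m (by omega), hpn (m+1) (by omega), hpn (m+2) (by omega)] at h
      exact h

lemma pnorm_zero (n : ℕ) (κ : Fin n → ℝ) : pnorm n 0 κ = 1 := by
  simp [pnorm, esymm, Finset.powersetCard_zero]

/-- For F = pₖ/p_{k−1} on Γₖ⁺:
Σᵢ ∂F/∂κᵢ = k − (k−1)p_{k−2}pₖ/p_{k−1}² and 1 ≤ Σᵢ ∂F/∂κᵢ ≤ k. -/
theorem stmt8 (n k : ℕ) (hk1 : 1 ≤ k) (hkn : k ≤ n) (κ : Fin n → ℝ)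
    (hΓ : ∀ j, 1 ≤ j → j ≤ k → 0 < pnorm n j κ) :
    (∑ i : Fin n,
        partialDeriv n (fun μ => pnorm n k μ / pnorm n (k - 1) μ) κ i)
      = (k : ℝ) - ((k : ℝ) - 1) * pnorm n (k - 2) κ * pnorm n k κ / (pnorm n (k - 1) κ) ^ 2 ∧
    1 ≤ ∑ i : Fin n,
        partialDeriv n (fun μ => pnorm n k μ / pnorm n (k - 1) μ) κ i ∧
    (∑ i : Fin n,
        partialDeriv n (fun μ => pnorm n k μ / pnorm n (k - 1) μ) κ i) ≤ (k : ℝ) := by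
  have hPpos : 0 < pnorm n (k-1) κ := by
    rcases Nat.lt_or_ge k 2 with h2 | h2
    · interval_cases k
      · rw [Nat.sub_self, pnorm_zero]; norm_num
    · exact hΓ (k-1) (by omega) (by omega)
  have hP : pnorm n (k-1) κ ≠ 0 := hPpos.ne'
  have hQpos : 0 < pnorm n k κ := hΓ k hk1 le_rfl
  have hRpos : 0 < pnorm n (k-2) κ := by
    rcases Nat.lt_or_ge k 3 with h3 | h3
    · have h0 : k - 2 = 0 := by omega
      rw [h0, pnorm_zero]; norm_num
    · exact hΓ (k-2) (by omega) (by omega)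
  -- the equality
  have heq : (∑ i : Fin n,
        partialDeriv n (fun μ => pnorm n k μ / pnorm n (k - 1) μ) κ i)
      = (k : ℝ) - ((k : ℝ) - 1) * pnorm n (k - 2) κ * pnorm n k κ / (pnorm n (k - 1) κ) ^ 2 := by
    have hsum : (∑ i : Fin n,
        partialDeriv n (fun μ => pnorm n k μ / pnorm n (k - 1) μ) κ i)
        = ((∑ i, Bco n k κ i) / (n.choose k : ℝ) * pnorm n (k-1) κ
            - pnorm n k κ * ((∑ i, Bco n (k-1) κ i) / (n.choose (k-1) : ℝ)))
          / (pnorm n (k-1) κ) ^ 2 := by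
      rw [Finset.sum_congr rfl (fun i _ => partialDeriv_quot n k κ i hP)]
      rw [← Finset.sum_div]
      congr 1
      rw [Finset.sum_sub_distrib, ← Finset.sum_mul, ← Finset.sum_div, ← Finset.mul_sum,
        ← Finset.sum_div]
    rw [hsum, sum_Bco_div n k hkn κ, sum_Bco_div n (k-1) (by omega) κ]
    have hc : ((k-1 : ℕ) : ℝ) = (k : ℝ) - 1 := by
      push_cast [Nat.cast_sub hk1]; ring
    have hc2 : (k-1) - 1 = k - 2 := by omega
    rw [hc, hc2]
    field_simp
  refine ⟨heq, ?_, ?_⟩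
  · rw [heq]
    rcases Nat.lt_or_ge k 2 with h2 | h2
    · interval_cases k
      · norm_num
    · have hN := newton n (k-2) κ
      rw [show k-2+2 = k from by omega, show k-2+1 = k-1 from by omega] at hN
      have h1 : ((k : ℝ) - 1) * pnorm n (k - 2) κ * pnorm n k κ / (pnorm n (k - 1) κ) ^ 2
          ≤ (k : ℝ) - 1 := by
        rw [div_le_iff₀ (by positivity)]
        have : pnorm n (k-2) κ * pnorm n k κ ≤ pnorm n (k-1) κ ^ 2 := hN
        have hk2 : (0:ℝ) ≤ (k:ℝ) - 1 := by
          have : (2:ℝ) ≤ (k:ℝ) := by exact_mod_cast h2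
          linarith
        nlinarith
      linarith
  · rw [heq]
    have : 0 ≤ ((k : ℝ) - 1) * pnorm n (k - 2) κ * pnorm n k κ / (pnorm n (k - 1) κ) ^ 2 := by
      have hk2 : (0:ℝ) ≤ (k:ℝ) - 1 := by
        have : (1:ℝ) ≤ (k:ℝ) := by exact_mod_cast hk1
        linarith
      positivity
    linarith
end

section
/- Suppose κ₁ ≥ ... ≥ κₙ and κ ∈ Γ_{m+1}⁺ (σⱼ(κ) > 0 for j = 1,...,m+1). Then σₘ(κ) ≥ κ₁κ₂···κₘ. -/
open Finset

/-!
Write `κ'` for `κ` with its largest entry `κ₁` removed, so that `σₘ(κ) = σₘ(κ') + κ₁ σₘ₋₁(κ')`.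
The key fact is that deleting an entry maps `Γₖ₊₁⁺` into `Γₖ⁺`; then `σₘ(κ') > 0`, `κ₁ > 0`
(as `σ₁(κ) > 0`), and induction on `m` gives `σₘ(κ) ≥ κ₁ σₘ₋₁(κ') ≥ κ₁⋯κₘ`.

The deletion property is proved by induction on `k`. If `σₖ(κ') ≤ 0`, shift every entry by the
same `t ≥ 0`: the cone `Γₖ₊₁⁺` is stable under such shifts, while `σₖ(κ' + t)` is eventually
positive, so it vanishes for some `t₀ ≥ 0`. At `t₀` the induction hypothesis gives
`σₖ₋₁(κ' + t₀) > 0`, and the degenerate case of Newton's inequality (`σₖ = 0 ⟹ σₖ₋₁σₖ₊₁ ≤ 0`,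
proved via Rolle's theorem) forces `σₖ₊₁(κ + t₀) = σₖ₊₁(κ' + t₀) ≤ 0`, a contradiction.
-/

open Polynomial

namespace Multiset

section CommSemiring

variable {R : Type*} [CommSemiring R]

theorem esymm_zero (s : Multiset R) : s.esymm 0 = 1 := by
  simp [esymm, powersetCard_zero_left]

theorem esymm_eq_zero_of_card_lt {s : Multiset R} {k : ℕ} (h : card s < k) : s.esymm k = 0 := by
  simp [esymm, powersetCard_eq_empty _ h]

theorem esymm_one (s : Multiset R) : s.esymm 1 = s.sum := by
  simp [esymm, powersetCard_one, map_map]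

theorem esymm_cons (a : R) (s : Multiset R) (k : ℕ) :
    (a ::ₘ s).esymm (k + 1) = s.esymm (k + 1) + a * s.esymm k := by
  simp only [esymm, powersetCard_cons, map_add, sum_add, map_map, Function.comp_def, prod_cons,
    sum_map_mul_left]

theorem esymm_card (s : Multiset R) : s.esymm (card s) = s.prod := by
  induction s using Multiset.induction with
  | empty => simp [esymm_zero]
  | cons a s ih =>
    rw [card_cons, esymm_cons, esymm_eq_zero_of_card_lt (Nat.lt_succ_self _), ih, prod_cons,
      zero_add]

theorem natDegree_prod_X_add_C_le (s : Multiset R) :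
    (s.map fun r => X + C r).prod.natDegree ≤ card s :=
  calc _ ≤ ((s.map fun r => X + C r).map natDegree).sum := natDegree_multiset_prod_le _
    _ ≤ (s.map fun _ => 1).sum := by
      rw [map_map]
      exact sum_map_le_sum_map _ _ fun r _ =>
        natDegree_add_le_of_degree_le natDegree_X_le ((natDegree_C r).trans_le zero_le_one)
    _ = card s := by simp

/-- The coefficients come from the Taylor expansion of `∏ (X + r)` at `t`. -/
theorem esymm_map_add (s : Multiset R) {j : ℕ} (hj : j ≤ card s) (t : R) :
    (s.map (· + t)).esymm j =
      ∑ q ∈ Finset.range (j + 1),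
        ((q + (card s - j)).choose (card s - j) : R) * s.esymm (j - q) * t ^ q := by
  set p := (s.map fun r => X + C r).prod
  have hshift : ((s.map (· + t)).map fun r => X + C r).prod = taylor t p := by
    simp only [p, taylor_apply, multiset_prod_comp, map_map, Function.comp_def, add_comp, X_comp,
      C_comp, C_add]
    congr 1
    exact map_congr rfl fun r _ => by ring
  have hcoeff : (s.map (· + t)).esymm j = (taylor t p).coeff (card s - j) := by
    rw [← hshift, prod_X_add_C_coeff _ (by simp), card_map, Nat.sub_sub_self hj]
  have hdeg : (hasseDeriv (card s - j) p).natDegree < j + 1 := by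
    have h1 := natDegree_hasseDeriv_le p (card s - j)
    have h2 : p.natDegree ≤ card s := natDegree_prod_X_add_C_le s
    omega
  rw [hcoeff, taylor_coeff, eval_eq_sum_range' hdeg]
  refine Finset.sum_congr rfl fun q hq => ?_
  rw [Finset.mem_range] at hq
  rw [hasseDeriv_coeff, prod_X_add_C_coeff _ (by omega)]
  congr 3
  omega

end CommSemiring

theorem esymm_nonneg {R : Type*} [CommSemiring R] [PartialOrder R] [IsOrderedRing R]
    {s : Multiset R} (h : ∀ x ∈ s, 0 ≤ x) (k : ℕ) : 0 ≤ s.esymm k :=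
  sum_nonneg fun _ hx => by
    obtain ⟨u, hu, rfl⟩ := mem_map.mp hx
    exact prod_nonneg fun y hy => h y (mem_of_le (mem_powersetCard.mp hu).1 hy)

theorem esymm_pos {R : Type*} [CommSemiring R] [PartialOrder R] [IsStrictOrderedRing R]
    {s : Multiset R} (h : ∀ x ∈ s, 0 < x) {k : ℕ} (hk : k ≤ card s) : 0 < s.esymm k := by
  have hne : powersetCard k s ≠ 0 := by
    rw [Ne, ← card_eq_zero, card_powersetCard]
    exact (Nat.choose_pos hk).ne'
  obtain ⟨u, hu⟩ := exists_mem_of_ne_zero hne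
  have hsub : ∀ y ∈ u, 0 < y := fun y hy => h y (mem_of_le (mem_powersetCard.mp hu).1 hy)
  exact (prod_pos hsub).trans_le <| single_le_sum
    (fun _ hx => by
      obtain ⟨v, hv, rfl⟩ := mem_map.mp hx
      exact (prod_pos fun y hy => h y (mem_of_le (mem_powersetCard.mp hv).1 hy)).le)
    _ (mem_map_of_mem _ hu)

theorem esymm_sq_sub_two_mul_esymm_mul_esymm {R : Type*} [CommRing R] {s : Multiset R} {j : ℕ}
    (hs : card s = j + 2) :
    s.esymm (j + 1) ^ 2 - 2 * (s.esymm j * s.esymm (j + 2)) = (s.map (· ^ 2)).esymm (j + 1) := by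
  induction j generalizing s with
  | zero =>
    obtain ⟨x, y, rfl⟩ := card_eq_two.mp hs
    simp only [zero_add, insert_eq_cons, map_cons, map_singleton, esymm_pair_one, esymm_pair_two,
      esymm_zero]
    ring
  | succ j ih =>
    obtain ⟨a, t, rfl⟩ : ∃ a t, s = a ::ₘ t := by
      obtain ⟨a, ha⟩ := card_pos_iff_exists_mem.mp (by omega : 0 < card s)
      exact ⟨a, exists_cons_of_mem ha⟩
    have ht : card t = j + 2 := by simpa using hs
    have htop : t.esymm (j + 2) = t.prod := ht ▸ esymm_card t
    have htop_sq : (t.map (· ^ 2)).esymm (j + 2) = t.prod ^ 2 := by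
      rw [← ht, ← card_map (· ^ 2) t, esymm_card, prod_map_pow, map_id']
    rw [map_cons, esymm_cons, esymm_cons, esymm_cons, esymm_cons,
      esymm_eq_zero_of_card_lt (by omega : card t < j + 3), htop_sq, ← ih ht, htop]
    ring

/-- Rolle's theorem: `t` is the multiset of negated roots of `(∏ (X + r))'`. -/
theorem exists_card_mul_esymm_eq (s : Multiset ℝ) :
    ∃ t : Multiset ℝ, card t = card s - 1 ∧
      ∀ k < card s, (card s : ℝ) * t.esymm k = (card s - k) * s.esymm k := by
  rcases eq_or_ne s 0 with rfl | hs
  · exact ⟨0, rfl, by simp⟩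
  set p := (s.map fun r => X + C r).prod with hp
  have hroots : card p.roots = card s := by
    have : p = ((s.map Neg.neg).map fun r => X - C r).prod := by
      simp only [hp, map_map, Function.comp_def, map_neg, sub_neg_eq_add]
    rw [this, roots_multiset_prod_X_sub_C, card_map]
  have hdeg : (derivative p).natDegree ≤ card s - 1 :=
    (natDegree_derivative_le p).trans (Nat.sub_le_sub_right (natDegree_prod_X_add_C_le s) 1)
  have hrolle : card p.roots ≤ card (derivative p).roots + 1 := card_roots_le_derivative p
  have hroots_le := card_roots' (derivative p)
  have hcard : card (derivative p).roots = card s - 1 := by omega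
  have hsplit : card (derivative p).roots = (derivative p).natDegree := by omega
  set t := (derivative p).roots.map Neg.neg
  have hfac : derivative p = C (derivative p).leadingCoeff * (t.map fun r => X + C r).prod := by
    conv_lhs => rw [← C_leadingCoeff_mul_prod_multiset_X_sub_C hsplit]
    simp only [t, map_map, Function.comp_def, map_neg, sub_eq_add_neg]
  have hct : card t = card s - 1 := by rw [card_map, hcard]
  have hcoeff : ∀ k < card s,
      (derivative p).leadingCoeff * t.esymm k = (card s - k) * s.esymm k := by
    intro k hk
    have h := congrArg (coeff · (card s - 1 - k)) hfac
    simp only [coeff_C_mul] at h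
    rw [prod_X_add_C_coeff _ (by omega), hct, Nat.sub_sub_self (by omega), coeff_derivative,
      hp, prod_X_add_C_coeff _ (by omega), show card s - (card s - 1 - k + 1) = k by omega] at h
    rw [← h, Nat.cast_sub (by omega), Nat.cast_sub (by omega)]
    push_cast
    ring
  have hlc : (derivative p).leadingCoeff = card s := by
    simpa [esymm_zero] using hcoeff 0 (card_pos.mpr hs)
  exact ⟨t, hct, hlc ▸ hcoeff⟩

/-- The degenerate case of Newton's inequality `σⱼ₊₁² ≥ c σⱼ σⱼ₊₂`. Differentiating
`∏ (X + r)` (Rolle) lowers `card s` while keeping the signs of `σⱼ, σⱼ₊₁, σⱼ₊₂`, down to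
`card s = j + 2`, where `esymm_sq_sub_two_mul_esymm_mul_esymm` applies. -/
theorem esymm_mul_esymm_nonpos_of_esymm_eq_zero {s : Multiset ℝ} {j : ℕ}
    (h : s.esymm (j + 1) = 0) : s.esymm j * s.esymm (j + 2) ≤ 0 := by
  obtain ⟨N, hN⟩ : ∃ N, card s = N := ⟨_, rfl⟩
  induction N generalizing s with
  | zero => rw [esymm_eq_zero_of_card_lt (k := j + 2) (by omega), mul_zero]
  | succ N ih =>
    rcases lt_trichotomy (N + 1) (j + 2) with hlt | heq | hgt
    · rw [esymm_eq_zero_of_card_lt (k := j + 2) (by omega), mul_zero]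
    · have hid := esymm_sq_sub_two_mul_esymm_mul_esymm (hN.trans heq)
      have hsq := esymm_nonneg (s := s.map (· ^ 2)) (by simp [sq_nonneg]) (j + 1)
      rw [h] at hid
      linarith
    · obtain ⟨t, ht, hrolle⟩ := exists_card_mul_esymm_eq s
      rw [hN] at ht hrolle
      push_cast at hrolle
      have ht0 : t.esymm (j + 1) = 0 := by
        have := hrolle (j + 1) (by omega)
        rw [h, mul_zero] at this
        exact (mul_eq_zero.mp this).resolve_left (by positivity)
      have hgt' : (j : ℝ) + 2 < N + 1 := by exact_mod_cast hgt
      refine nonpos_of_mul_nonpos_left (b := ((N + 1 : ℝ) - j) * ((N + 1 : ℝ) - (j + 2))) ?_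
        (by nlinarith)
      calc s.esymm j * s.esymm (j + 2) * (((N + 1 : ℝ) - j) * ((N + 1 : ℝ) - (j + 2)))
          = ((N + 1) * t.esymm j) * ((N + 1) * t.esymm (j + 2)) := by
            rw [hrolle j (by omega), hrolle (j + 2) (by omega)]
            push_cast
            ring
        _ = (N + 1) ^ 2 * (t.esymm j * t.esymm (j + 2)) := by ring
        _ ≤ 0 := mul_nonpos_of_nonneg_of_nonpos (by positivity) (ih ht0 (by omega))

theorem exists_nonneg_esymm_map_add_eq_zero {s : Multiset ℝ} {j : ℕ} (hj : j ≤ card s)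
    (h : s.esymm j ≤ 0) : ∃ t, 0 ≤ t ∧ (s.map (· + t)).esymm j = 0 := by
  set T := (s.map abs).sum + 1
  have hsum : 0 ≤ (s.map abs).sum := sum_nonneg fun _ hx => by
    obtain ⟨x, -, rfl⟩ := mem_map.mp hx
    exact abs_nonneg x
  have hT : 0 ≤ T := by linarith
  have hpos : 0 < (s.map (· + T)).esymm j := by
    refine esymm_pos (fun y hy => ?_) (by rwa [card_map])
    obtain ⟨x, hx, rfl⟩ := mem_map.mp hy
    have : |x| ≤ (s.map abs).sum :=
      single_le_sum (fun _ hx => by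
        obtain ⟨x, -, rfl⟩ := mem_map.mp hx
        exact abs_nonneg x) _ (mem_map_of_mem _ hx)
    linarith [neg_abs_le x]
  have hcont : Continuous fun t : ℝ => (s.map (· + t)).esymm j := by
    simp_rw [esymm_map_add s hj]
    fun_prop
  obtain ⟨t, ht, hzero⟩ := intermediate_value_Icc hT hcont.continuousOn ⟨by simpa using h, hpos.le⟩
  exact ⟨t, ht.1, hzero⟩

/-- `Γₖ⁺`; the condition at `j = 0` is automatic since `σ₀ = 1`. -/
def InGardingCone (k : ℕ) (s : Multiset ℝ) : Prop :=
  ∀ j ≤ k, 0 < s.esymm j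

namespace InGardingCone

variable {k : ℕ} {s : Multiset ℝ}

theorem mono {k' : ℕ} (h : InGardingCone k s) (hk : k' ≤ k) : InGardingCone k' s :=
  fun j hj => h j (hj.trans hk)

theorem le_card (h : InGardingCone k s) : k ≤ card s := by
  by_contra! hlt
  exact (h k le_rfl).ne' (esymm_eq_zero_of_card_lt hlt)

theorem map_add (h : InGardingCone k s) {t : ℝ} (ht : 0 ≤ t) :
    InGardingCone k (s.map (· + t)) := by
  intro j hj
  rw [esymm_map_add s (hj.trans h.le_card)]
  refine Finset.sum_pos' (fun q hq => ?_) ⟨0, by simp, by simpa using h j hj⟩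
  have := (h (j - q) (by omega)).le
  positivity

theorem of_cons {a : ℝ} (h : InGardingCone (k + 1) (a ::ₘ s)) : InGardingCone k s := by
  induction k generalizing a s with
  | zero =>
    intro j hj
    rw [Nat.le_zero.mp hj, esymm_zero]
    exact one_pos
  | succ k ih =>
    intro j hj
    rcases Nat.lt_or_eq_of_le hj with hlt | rfl
    · exact ih (h.mono (by omega)) j (by omega)
    by_contra! hneg
    have hcard : k + 1 ≤ card s := by simpa using h.le_card
    obtain ⟨t, ht, hzero⟩ := exists_nonneg_esymm_map_add_eq_zero hcard hneg
    have hshift : InGardingCone (k + 2) ((a + t) ::ₘ s.map (· + t)) := by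
      simpa using h.map_add ht
    have hk : 0 < (s.map (· + t)).esymm k := ih (hshift.mono (by omega)) k le_rfl
    have htop := hshift (k + 2) le_rfl
    rw [esymm_cons, hzero, mul_zero, add_zero] at htop
    exact (mul_pos hk htop).not_ge (esymm_mul_esymm_nonpos_of_esymm_eq_zero hzero)

end InGardingCone

end Multiset

open Multiset in
theorem List.prod_take_le_esymm {m : ℕ} {l : List ℝ} (hl : l.Pairwise (· ≥ ·))
    (h : InGardingCone (m + 1) l) : (l.take m).prod ≤ (l : Multiset ℝ).esymm m := by
  induction m generalizing l with
  | zero => simp [esymm_zero]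
  | succ m ih =>
    cases l with
    | nil => exact absurd h.le_card (by simp)
    | cons a l =>
      rw [← cons_coe] at h ⊢
      obtain ⟨hal, hl⟩ := List.pairwise_cons.mp hl
      have hl' : InGardingCone (m + 1) l := h.of_cons
      have ha : 0 < a := by
        by_contra! ha
        have hsum : (a ::ₘ (l : Multiset ℝ)).sum ≤ 0 :=
          (sum_le_card_nsmul _ a fun x hx => (mem_cons.mp hx).elim le_of_eq (hal x)).trans
            (nsmul_nonpos ha _)
        exact hsum.not_gt (esymm_one (a ::ₘ (l : Multiset ℝ)) ▸ h 1 (by omega))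
      calc ((a :: l).take (m + 1)).prod = a * (l.take m).prod := by simp
        _ ≤ a * (l : Multiset ℝ).esymm m := mul_le_mul_of_nonneg_left (ih hl hl') ha.le
        _ ≤ (a ::ₘ (l : Multiset ℝ)).esymm (m + 1) := by
          rw [esymm_cons]
          linarith [hl' (m + 1) le_rfl]

/-- If κ₁ ≥ ⋯ ≥ κₙ and κ ∈ Γ_{m+1}⁺, then σₘ(κ) ≥ κ₁⋯κₘ. -/
theorem stmt13 (n m : ℕ) (hmn : m + 1 ≤ n) (κ : Fin n → ℝ)
    (hsort : ∀ i j : Fin n, i ≤ j → κ j ≤ κ i)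
    (hΓ : ∀ j, 1 ≤ j → j ≤ m + 1 → 0 < esymm n j κ) :
    (∏ i : Fin m, κ (Fin.castLE (by omega : m ≤ n) i)) ≤ esymm n m κ := by
  have hesymm : ∀ j, esymm n j κ = (List.ofFn κ : Multiset ℝ).esymm j := fun j => by
    rw [esymm, ← Finset.esymm_map_val, Fin.univ_val_map]
  have hcone : Multiset.InGardingCone (m + 1) (List.ofFn κ) := by
    rintro (_ | j) hj
    · simp [Multiset.esymm_zero]
    · exact hesymm _ ▸ hΓ _ (by omega) hj
  have hsorted : (List.ofFn κ).Pairwise (· ≥ ·) :=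
    List.pairwise_ofFn.mpr fun i j hij => hsort i j hij.le
  calc ∏ i : Fin m, κ (Fin.castLE _ i) = ((List.ofFn κ).take m).prod := by
        rw [← Fin.ofFn_take_eq_take_ofFn (by omega), List.prod_ofFn]
        rfl
    _ ≤ _ := List.prod_take_le_esymm hsorted hcone
    _ = esymm n m κ := (hesymm m).symm
end

section
/- Let F: Γₙ⁺ → (0,∞) be smooth, symmetric, strictly increasing, 1-homogeneous with F(1,...,1) = 1. If F is inverse concave (i.e. the function F*(κ) := F(κ₁⁻¹,...,κₙ⁻¹)⁻¹ is concave), then Σᵢ κᵢ² ∂F/∂κᵢ ≥ F(κ)² for all κ in the positive cone. -/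
open Finset

/-- If F is a smooth, symmetric, positive, strictly increasing, 1-homogeneous
curvature function on the positive cone Γₙ⁺, normalized by F(1,…,1) = 1, and F is
inverse concave (κ ↦ F(κ₁⁻¹,…,κₙ⁻¹)⁻¹ is concave), then Σᵢ κᵢ² ∂F/∂κᵢ ≥ F(κ)². -/
theorem stmt15 (n : ℕ) (hn : 1 ≤ n) (F : (Fin n → ℝ) → ℝ)
    (hsmooth : ContDiffOn ℝ (⊤ : ℕ∞) F {κ : Fin n → ℝ | ∀ i, 0 < κ i})
    (hsym : ∀ κ : Fin n → ℝ, (∀ i, 0 < κ i) →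
      ∀ e : Equiv.Perm (Fin n), F (κ ∘ e) = F κ)
    (hpos : ∀ κ : Fin n → ℝ, (∀ i, 0 < κ i) → 0 < F κ)
    (hmono : ∀ κ : Fin n → ℝ, (∀ i, 0 < κ i) → ∀ i, 0 < partialDeriv n F κ i)
    (hhom : ∀ κ : Fin n → ℝ, (∀ i, 0 < κ i) → ∀ t : ℝ, 0 < t → F (t • κ) = t * F κ)
    (hnorm : F (fun _ => 1) = 1)
    (hinvconc : ConcaveOn ℝ {κ : Fin n → ℝ | ∀ i, 0 < κ i}
      (fun κ => (F (fun i => (κ i)⁻¹))⁻¹)) :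
    ∀ κ : Fin n → ℝ, (∀ i, 0 < κ i) →
      F κ ^ 2 ≤ ∑ i : Fin n, (κ i) ^ 2 * partialDeriv n F κ i := by
  intro κ hκ
  set Ω : Set (Fin n → ℝ) := {κ : Fin n → ℝ | ∀ i, 0 < κ i} with hΩ
  have hΩopen : IsOpen Ω := by
    have : Ω = ⋂ i, (fun y : Fin n → ℝ => y i) ⁻¹' Set.Ioi 0 := by
      ext y; simp [hΩ, Set.mem_iInter]
    rw [this]
    exact isOpen_iInter_of_finite fun i => isOpen_Ioi.preimage (continuous_apply i)
  have hκΩ : κ ∈ Ω := hκ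
  have hFκpos : 0 < F κ := hpos κ hκ
  have hdiff : DifferentiableAt ℝ F κ :=
    (hsmooth.contDiffAt (hΩopen.mem_nhds hκΩ)).differentiableAt (by simp)
  set L : (Fin n → ℝ) →L[ℝ] ℝ := fderiv ℝ F κ with hL
  have hFd : HasFDerivAt F L κ := hdiff.hasFDerivAt
  -- partial derivatives equal L applied to basis vectors
  have hpd : ∀ i, partialDeriv n F κ i = L (Pi.single i (1:ℝ)) := by
    intro i
    have hu : ∀ t : ℝ, Function.update κ i t
        = κ + (t - κ i) • (Pi.single i (1:ℝ) : Fin n → ℝ) := by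
      intro t; ext j
      by_cases h : j = i
      · subst h; simp
      · simp [Function.update_of_ne h, Pi.single_apply, h]
    have hc : HasDerivAt (fun t : ℝ => κ + (t - κ i) • (Pi.single i (1:ℝ) : Fin n → ℝ))
        (Pi.single i (1:ℝ)) (κ i) := by
      have := ((hasDerivAt_id (κ i)).sub_const (κ i)).smul_const
        (Pi.single i (1:ℝ) : Fin n → ℝ)
      simpa using this.const_add κ
    have hFd' : HasFDerivAt F L (κ + (κ i - κ i) • (Pi.single i (1:ℝ) : Fin n → ℝ)) := by
      simpa using hFd
    have hc2 := hFd'.comp_hasDerivAt (κ i) hc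
    have hc3 : HasDerivAt (fun t : ℝ => F (Function.update κ i t))
        (L (Pi.single i (1:ℝ))) (κ i) := by
      simpa [Function.comp_def, hu] using hc2
    exact hc3.deriv
  -- L applied to any vector
  have hLsum : ∀ v : Fin n → ℝ, L v = ∑ i, v i * L (Pi.single i (1:ℝ)) := by
    intro v
    have hv : v = ∑ i, v i • (Pi.single i (1:ℝ) : Fin n → ℝ) := by
      ext j
      rw [Finset.sum_apply]
      simp [Pi.single_apply]
    calc L v = L (∑ i, v i • (Pi.single i (1:ℝ) : Fin n → ℝ)) := by rw [← hv]
      _ = ∑ i, v i * L (Pi.single i (1:ℝ)) := by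
          rw [map_sum]; simp [smul_eq_mul]
  -- Euler relation
  have hEuler : L κ = F κ := by
    have hc : HasDerivAt (fun t : ℝ => t • κ) κ (1 : ℝ) := by
      simpa using (hasDerivAt_id (1 : ℝ)).smul_const κ
    have hFd' : HasFDerivAt F L ((1:ℝ) • κ) := by simpa using hFd
    have h1 : HasDerivAt (fun t : ℝ => F (t • κ)) (L κ) 1 := by
      simpa [Function.comp_def] using hFd'.comp_hasDerivAt (1:ℝ) hc
    have h2 : HasDerivAt (fun t : ℝ => F (t • κ)) (F κ) 1 := by
      have heq : (fun t : ℝ => t * F κ) =ᶠ[nhds (1 : ℝ)] fun t => F (t • κ) := by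
        filter_upwards [Ioi_mem_nhds (zero_lt_one : (0:ℝ) < 1)] with t ht
        exact (hhom κ hκ t ht).symm
      exact HasDerivAt.congr_of_eventuallyEq
        (by simpa using (hasDerivAt_id (1:ℝ)).mul_const (F κ)) heq.symm
    exact h1.unique h2
  -- the inverse point and curve
  set x : Fin n → ℝ := fun i => (κ i)⁻¹ with hx
  have hxpos : ∀ i, 0 < x i := fun i => inv_pos.mpr (hκ i)
  have hxΩ : x ∈ Ω := hxpos
  have honeΩ : (fun _ : Fin n => (1:ℝ)) ∈ Ω := fun i => one_pos
  set G : (Fin n → ℝ) → ℝ := fun y => (F (fun i => (y i)⁻¹))⁻¹ with hG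
  have hGx : G x = (F κ)⁻¹ := by
    have : (fun i => (x i)⁻¹) = κ := by ext i; simp [hx]
    simp only [hG, this]
  have hG1 : G (fun _ => 1) = 1 := by
    have : (fun i : Fin n => ((fun _ : Fin n => (1:ℝ)) i)⁻¹) = fun _ : Fin n => (1:ℝ) := by
      ext i; simp
    simp only [hG, this, hnorm, inv_one]
  set c : ℝ → (Fin n → ℝ) := fun t => fun i => x i + t * (1 - x i) with hc
  have hc0 : c 0 = x := by ext i; simp [hc]
  set u : ℝ → (Fin n → ℝ) := fun t => fun i => (c t i)⁻¹ with hu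
  have hu0 : u 0 = κ := by ext i; simp [hu, hc, hx]
  set w : Fin n → ℝ := fun i => (1 - x i) * (κ i) ^ 2 with hw
  have hud : HasDerivAt u (fun i => -w i) 0 := by
    rw [hasDerivAt_pi]
    intro i
    have h1 : HasDerivAt (fun t : ℝ => x i + t * (1 - x i)) (1 - x i) 0 := by
      simpa using ((hasDerivAt_id (0:ℝ)).mul_const (1 - x i)).const_add (x i)
    have hne : x i + (0:ℝ) * (1 - x i) ≠ 0 := by simpa using (hxpos i).ne'
    have h2 := h1.inv hne
    have : -(1 - x i) / (x i + 0 * (1 - x i)) ^ 2 = -w i := by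
      simp only [hw, hx]
      have hκi := (hκ i).ne'
      field_simp
      ring
    rw [← this]
    exact h2
  -- derivative of g(t) = G(c t) = (F (u t))⁻¹ at 0
  have hFd'' : HasFDerivAt F L (u 0) := by rw [hu0]; exact hFd
  have hFu : HasDerivAt (fun t => F (u t)) (L (fun i => -w i)) 0 := by
    simpa [Function.comp_def] using hFd''.comp_hasDerivAt (0:ℝ) hud
  have hFu0 : F (u 0) ≠ 0 := by rw [hu0]; exact hFκpos.ne'
  have hg : HasDerivAt (fun t => (F (u t))⁻¹)
      (-(L (fun i => -w i)) / (F (u 0)) ^ 2) 0 := hFu.inv hFu0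
  have hD : -(L (fun i => -w i)) / (F (u 0)) ^ 2 = L w / (F κ) ^ 2 := by
    have : (fun i => -w i) = -w := rfl
    rw [this, map_neg, neg_neg, hu0]
  rw [hD] at hg
  -- concavity gives lower bound on slope for t ∈ (0,1]
  have hslope : ∀ t ∈ Set.Ioc (0:ℝ) 1, 1 - (F κ)⁻¹ ≤ slope (fun t => (F (u t))⁻¹) 0 t := by
    intro t ht
    have hct : c t = (1 - t) • x + t • (fun _ : Fin n => (1:ℝ)) := by
      ext i; simp [hc]; ring
    have hcon := hinvconc.2 hxΩ honeΩ (sub_nonneg.mpr ht.2) ht.1.le (by ring)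
    rw [← hct] at hcon
    have hgt : (1 - t) * (F κ)⁻¹ + t * 1 ≤ (F (u t))⁻¹ := by
      have : G (c t) = (F (u t))⁻¹ := rfl
      rw [← this, ← hGx]
      simpa [smul_eq_mul, hG1] using hcon
    have hg0 : (F (u 0))⁻¹ = (F κ)⁻¹ := by rw [hu0]
    rw [slope_def_field, hg0, sub_zero, le_div_iff₀ ht.1]
    nlinarith [hgt]
  have htends : Filter.Tendsto (slope (fun t => (F (u t))⁻¹) 0)
      (nhdsWithin 0 (Set.Ioi 0)) (nhds (L w / F κ ^ 2)) :=
    (hasDerivAt_iff_tendsto_slope.mp hg).mono_left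
      (nhdsWithin_mono 0 (fun t ht => Set.mem_compl_singleton_iff.mpr (ne_of_gt ht)))
  have hkey : 1 - (F κ)⁻¹ ≤ L w / F κ ^ 2 := by
    refine ge_of_tendsto htends ?_
    filter_upwards [Ioc_mem_nhdsGT_of_mem ⟨le_refl (0:ℝ), zero_lt_one⟩] with t ht
    exact hslope t ht
  have hLw : L w = (∑ i, κ i ^ 2 * partialDeriv n F κ i) - F κ := by
    rw [hLsum w, ← hEuler, hLsum κ, ← Finset.sum_sub_distrib]
    apply Finset.sum_congr rfl
    intro i _
    rw [hpd i]
    have hwi : w i = κ i ^ 2 - κ i := by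
      simp only [hw, hx]
      have hκi := (hκ i).ne'
      field_simp
    rw [hwi]; ring
  rw [hLw] at hkey
  have h2 : (1 - (F κ)⁻¹) * F κ ^ 2 ≤ (∑ i, κ i ^ 2 * partialDeriv n F κ i) - F κ := by
    rwa [← le_div_iff₀ (by positivity)]
  have h3 : (1 - (F κ)⁻¹) * F κ ^ 2 = F κ ^ 2 - F κ := by
    field_simp
  linarith
end
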